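/- arXiv:2508.08738 — 4 statements merged into one kernel-verified Lean document; each statement's English description precedes it below -/
import Mathlib

section
/- For every nonzero complex number λ and every polynomial β ∈ ℂ[y], the operators L_m, H_m, G_p, Q_p of Ω(λ,β) form a representation of the N=1 Heisenberg-Virasoro superalgebra 𝔤 (they satisfy all ten listed super-bracket relations); moreover, under the action of the polynomial algebra ℂ[z,w] in which z acts as the operator L₀ and w as the operator H₀ (these commute), Ω(λ,β) is a free module of rank 2, with basis the constant polynomial 1 ∈ ℂ[x,y] and the constant polynomial 1 ∈ ℂ[s,t]. -/
open Polynomial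

noncomputable section

/-- `ℂ[x,y]`, realized as polynomials in an outer variable `x` (= `X`) with coefficients in
`ℂ[y]`; the inner variable `y` is `C X`.  The same type also models `ℂ[s,t]`. -/
abbrev P2 : Type := Polynomial (Polynomial ℂ)

/-- the polynomial `x` -/
def xP : P2 := Polynomial.X

/-- the polynomial `y` -/
def yP : P2 := Polynomial.C Polynomial.X

/-- multiplication by a fixed polynomial, as a `ℂ`-linear operator on `ℂ[x,y]` -/
def mulOp (a : P2) : P2 →ₗ[ℂ] P2 := LinearMap.mulLeft ℂ a

/-- the substitution `f(x,y) ↦ f(x+c,y)`, as a `ℂ`-linear operator on `ℂ[x,y]` -/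
def shiftOp (c : ℂ) : P2 →ₗ[ℂ] P2 :=
  (Polynomial.taylor (Polynomial.C c)).restrictScalars ℂ

/-- `f(x,y) ↦ λ^m (x + m β(y)) f(x+m, y)` -/
def genL (lam : ℂ) (β : Polynomial ℂ) (m : ℤ) : P2 →ₗ[ℂ] P2 :=
  lam ^ m • (mulOp (xP + Polynomial.C ((m : ℂ) • β)) ∘ₗ shiftOp (m : ℂ))

/-- `f(x,y) ↦ λ^m y f(x+m, y)` -/
def genH (lam : ℂ) (m : ℤ) : P2 →ₗ[ℂ] P2 :=
  lam ^ m • (mulOp yP ∘ₗ shiftOp (m : ℂ))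

/- In everything that follows, the odd (half-integer) index `p ∈ ℤ + 1/2` is encoded by the
integer `k : ℤ` with `p = k + 1/2`. -/

/-- `L_m` on the even part `ℂ[x,y]` of `Ω(λ,β)` -/
def omegaLe (lam : ℂ) (β : Polynomial ℂ) (m : ℤ) : P2 →ₗ[ℂ] P2 := genL lam β m

/-- `L_m` on the odd part `ℂ[s,t]` of `Ω(λ,β)` -/
def omegaLo (lam : ℂ) (β : Polynomial ℂ) (m : ℤ) : P2 →ₗ[ℂ] P2 :=
  genL lam (β + Polynomial.C (1/2)) m

/-- `H_m` on either part of `Ω(λ,β)` -/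
def omegaH (lam : ℂ) (m : ℤ) : P2 →ₗ[ℂ] P2 := genH lam m

/-- `G_{k+1/2} : M₀ → M₁`, `f(x,y) ↦ λ^{p-1/2} f(s+p,t)` -/
def omegaGe (lam : ℂ) (k : ℤ) : P2 →ₗ[ℂ] P2 := lam ^ k • shiftOp ((k : ℂ) + 1/2)

/-- `G_{k+1/2} : M₁ → M₀`, `f(s,t) ↦ λ^{p+1/2} (x + 2p β(y)) f(x+p,y)` -/
def omegaGo (lam : ℂ) (β : Polynomial ℂ) (k : ℤ) : P2 →ₗ[ℂ] P2 :=
  lam ^ (k + 1) • (mulOp (xP + Polynomial.C (((2*k+1 : ℤ) : ℂ) • β)) ∘ₗ shiftOp ((k : ℂ) + 1/2))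

/-- `Q_{k+1/2} : M₀ → M₁` is the zero map -/
def omegaQe (_k : ℤ) : P2 →ₗ[ℂ] P2 := 0

/-- `Q_{k+1/2} : M₁ → M₀`, `f(s,t) ↦ λ^{p+1/2} y f(x+p,y)` -/
def omegaQo (lam : ℂ) (k : ℤ) : P2 →ₗ[ℂ] P2 :=
  lam ^ (k + 1) • (mulOp yP ∘ₗ shiftOp ((k : ℂ) + 1/2))

/-- A representation of the N=1 Heisenberg-Virasoro superalgebra `𝔤` on the `ℤ₂`-graded
complex vector space `M₀ ⊕ M₁`: operators `Le m`/`Lo m` (resp. `He`/`Ho`) are the even/odd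
components of `L_m` (resp. `H_m`), and `Ge k`/`Go k` (resp. `Qe`/`Qo`) are the two components
of the grading-reversing operator `G_{k+1/2}` (resp. `Q_{k+1/2}`); all ten super-bracket
relations are required to hold on both graded components. -/
structure GRep (M₀ M₁ : Type*) [AddCommGroup M₀] [Module ℂ M₀]
    [AddCommGroup M₁] [Module ℂ M₁] where
  Le : ℤ → M₀ →ₗ[ℂ] M₀
  Lo : ℤ → M₁ →ₗ[ℂ] M₁
  He : ℤ → M₀ →ₗ[ℂ] M₀
  Ho : ℤ → M₁ →ₗ[ℂ] M₁
  Ge : ℤ → M₀ →ₗ[ℂ] M₁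
  Go : ℤ → M₁ →ₗ[ℂ] M₀
  Qe : ℤ → M₀ →ₗ[ℂ] M₁
  Qo : ℤ → M₁ →ₗ[ℂ] M₀
  rel_LL_e : ∀ m n : ℤ, Le m ∘ₗ Le n - Le n ∘ₗ Le m = ((m : ℂ) - (n : ℂ)) • Le (m + n)
  rel_LL_o : ∀ m n : ℤ, Lo m ∘ₗ Lo n - Lo n ∘ₗ Lo m = ((m : ℂ) - (n : ℂ)) • Lo (m + n)
  rel_LH_e : ∀ m n : ℤ, Le m ∘ₗ He n - He n ∘ₗ Le m = (-(n : ℂ)) • He (m + n)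
  rel_LH_o : ∀ m n : ℤ, Lo m ∘ₗ Ho n - Ho n ∘ₗ Lo m = (-(n : ℂ)) • Ho (m + n)
  rel_LG_e : ∀ (m k : ℤ),
    Lo m ∘ₗ Ge k - Ge k ∘ₗ Le m = ((m : ℂ)/2 - ((k : ℂ) + 1/2)) • Ge (m + k)
  rel_LG_o : ∀ (m k : ℤ),
    Le m ∘ₗ Go k - Go k ∘ₗ Lo m = ((m : ℂ)/2 - ((k : ℂ) + 1/2)) • Go (m + k)
  rel_LQ_e : ∀ (m k : ℤ),
    Lo m ∘ₗ Qe k - Qe k ∘ₗ Le m = (-((m : ℂ)/2 + ((k : ℂ) + 1/2))) • Qe (m + k)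
  rel_LQ_o : ∀ (m k : ℤ),
    Le m ∘ₗ Qo k - Qo k ∘ₗ Lo m = (-((m : ℂ)/2 + ((k : ℂ) + 1/2))) • Qo (m + k)
  rel_HG_e : ∀ (m k : ℤ), Ho m ∘ₗ Ge k - Ge k ∘ₗ He m = (m : ℂ) • Qe (m + k)
  rel_HG_o : ∀ (m k : ℤ), He m ∘ₗ Go k - Go k ∘ₗ Ho m = (m : ℂ) • Qo (m + k)
  rel_GG_e : ∀ k l : ℤ, Go k ∘ₗ Ge l + Go l ∘ₗ Ge k = (2 : ℂ) • Le (k + l + 1)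
  rel_GG_o : ∀ k l : ℤ, Ge k ∘ₗ Go l + Ge l ∘ₗ Go k = (2 : ℂ) • Lo (k + l + 1)
  rel_GQ_e : ∀ k l : ℤ, Go k ∘ₗ Qe l + Qo l ∘ₗ Ge k = He (k + l + 1)
  rel_GQ_o : ∀ k l : ℤ, Ge k ∘ₗ Qo l + Qe l ∘ₗ Go k = Ho (k + l + 1)
  rel_HH_e : ∀ m n : ℤ, He m ∘ₗ He n = He n ∘ₗ He m
  rel_HH_o : ∀ m n : ℤ, Ho m ∘ₗ Ho n = Ho n ∘ₗ Ho m
  rel_HQ_e : ∀ (m k : ℤ), Ho m ∘ₗ Qe k = Qe k ∘ₗ He m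
  rel_HQ_o : ∀ (m k : ℤ), He m ∘ₗ Qo k = Qo k ∘ₗ Ho m
  rel_QQ_e : ∀ k l : ℤ, Qo k ∘ₗ Qe l + Qo l ∘ₗ Qe k = 0
  rel_QQ_o : ∀ k l : ℤ, Qe k ∘ₗ Qo l + Qe l ∘ₗ Qo k = 0

/-- evaluation of a two-variable polynomial (an element of `P2`, outer variable ↦ `A`,
inner variable ↦ `B`) at a pair of commuting operators -/
def eval2End {V : Type*} [AddCommGroup V] [Module ℂ V] (A B : Module.End ℂ V)
    (f : P2) : Module.End ℂ V :=
  Polynomial.eval₂ (Polynomial.aeval B).toRingHom A f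

/-- multiplication by a fixed polynomial on `ℂ[x]` -/
def mul1 (a : Polynomial ℂ) : Polynomial ℂ →ₗ[ℂ] Polynomial ℂ := LinearMap.mulLeft ℂ a

/-- the substitution `f(x) ↦ f(x+c)` on `ℂ[x]` -/
def tay (c : ℂ) : Polynomial ℂ →ₗ[ℂ] Polynomial ℂ := Polynomial.taylor c

/-- `f(x) ↦ λ^m (x + m c) f(x+m)` -/
def phiL (lam c : ℂ) (m : ℤ) : Polynomial ℂ →ₗ[ℂ] Polynomial ℂ :=
  lam ^ m • (mul1 (Polynomial.X + Polynomial.C ((m : ℂ) * c)) ∘ₗ tay (m : ℂ))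

/-- `f(x) ↦ λ^m b f(x+m)` -/
def phiH (lam b : ℂ) (m : ℤ) : Polynomial ℂ →ₗ[ℂ] Polynomial ℂ :=
  (lam ^ m * b) • tay (m : ℂ)

/-- `f(x) ↦ λ^{p-1/2} f(s+p)`, `p = k + 1/2` -/
def phiGe (lam : ℂ) (k : ℤ) : Polynomial ℂ →ₗ[ℂ] Polynomial ℂ :=
  lam ^ k • tay ((k : ℂ) + 1/2)

/-- `f(s) ↦ λ^{p+1/2} (x + 2 p c) f(x+p)`, `p = k + 1/2` -/
def phiGo (lam c : ℂ) (k : ℤ) : Polynomial ℂ →ₗ[ℂ] Polynomial ℂ :=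
  lam ^ (k + 1) • (mul1 (Polynomial.X + Polynomial.C (((2*k+1 : ℤ) : ℂ) * c)) ∘ₗ tay ((k : ℂ) + 1/2))

/-- `f(s) ↦ λ^{p+1/2} b f(x+p)`, `p = k + 1/2` -/
def phiQo (lam b : ℂ) (k : ℤ) : Polynomial ℂ →ₗ[ℂ] Polynomial ℂ :=
  (lam ^ (k + 1) * b) • tay ((k : ℂ) + 1/2)

/-- one graded component of `R_g`, i.e. `g(y)ℂ[x,y]` (equivalently `g(t)ℂ[s,t]`) -/
def Rg (g : Polynomial ℂ) : Submodule ℂ P2 := LinearMap.range (mulOp (Polynomial.C g))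

/-- the even component of `S_g`, i.e. `g(y)(xℂ[x,y] + yℂ[x,y])` -/
def Sg (g : Polynomial ℂ) : Submodule ℂ P2 :=
  LinearMap.range (mulOp (xP * Polynomial.C g)) ⊔ LinearMap.range (mulOp (yP * Polynomial.C g))

/-- the embedding `ℂ[x] → ℂ[x,y]` -/
def embX (f : Polynomial ℂ) : P2 := f.map Polynomial.C

/-- `f(x) ↦` class of `g'(y)·f(x)` in `ℂ[x,y]/R_g` -/
def psiMap (g g' : Polynomial ℂ) (f : Polynomial ℂ) : P2 ⧸ Rg g :=
  (Rg g).mkQ (Polynomial.C g' * embX f)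


/-! ### Auxiliary infrastructure -/

/-- the basic building block `f ↦ a · f(x + c)` -/
def EOp (a : P2) (c : ℂ) : P2 →ₗ[ℂ] P2 := mulOp a ∘ₗ shiftOp c

lemma EOp_apply (a : P2) (c : ℂ) (f : P2) :
    EOp a c f = a * Polynomial.taylor (Polynomial.C c) f := rfl

lemma EOp_comp (a b : P2) (c d : ℂ) :
    EOp a c ∘ₗ EOp b d = EOp (a * Polynomial.taylor (Polynomial.C c) b) (c + d) := by
  apply LinearMap.ext; intro f
  simp only [LinearMap.comp_apply, EOp_apply, taylor_mul, taylor_taylor, ← Polynomial.C_add,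
    mul_assoc]

lemma EOp_smul (s : ℂ) (a : P2) (c : ℂ) : EOp (s • a) c = s • EOp a c := by
  apply LinearMap.ext; intro f
  simp [EOp_apply, smul_mul_assoc]

lemma EOp_sub (a b : P2) (c : ℂ) : EOp (a - b) c = EOp a c - EOp b c := by
  apply LinearMap.ext; intro f
  simp [EOp_apply, sub_mul]

lemma EOp_add (a b : P2) (c : ℂ) : EOp (a + b) c = EOp a c + EOp b c := by
  apply LinearMap.ext; intro f
  simp [EOp_apply, add_mul]

lemma EOp_one (c : ℂ) : shiftOp c = EOp 1 c := by
  apply LinearMap.ext; intro f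
  simp [EOp_apply, shiftOp]

lemma sE_comp (s t : ℂ) (a b : P2) (c d : ℂ) :
    (s • EOp a c) ∘ₗ (t • EOp b d)
      = (s * t) • EOp (a * Polynomial.taylor (Polynomial.C c) b) (c + d) := by
  rw [LinearMap.smul_comp, LinearMap.comp_smul, smul_smul, EOp_comp]

lemma taylor_two (r : Polynomial ℂ) : Polynomial.taylor r (2 : P2) = 2 := by
  have h : (2:P2) = Polynomial.C (2 : Polynomial ℂ) := by rw [map_ofNat]
  rw [h, taylor_C]

lemma smulP2 (s : ℂ) (p : P2) : s • p = Polynomial.C (Polynomial.C s) * p := by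
  rw [Algebra.smul_def, Polynomial.algebraMap_apply, Polynomial.algebraMap_apply,
    Algebra.algebraMap_self_apply]

lemma halfP2 : (Polynomial.C (Polynomial.C ((2:ℂ)⁻¹)) * 2 : P2) = 1 := by
  have h : ((2:P2)) = Polynomial.C (Polynomial.C (2:ℂ)) := by
    rw [map_ofNat, map_ofNat]
  rw [h, ← Polynomial.C_mul, ← Polynomial.C_mul]
  norm_num

lemma key_sub {s t u v : ℂ} {A B D : P2} {c₁ c₂ c₃ : ℂ} (hc₁ : c₁ = c₃) (hc₂ : c₂ = c₃)
    (h : s • A - t • B = (u * v) • D) :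
    s • EOp A c₁ - t • EOp B c₂ = u • (v • EOp D c₃) := by
  subst hc₁; subst hc₂
  rw [smul_smul, ← EOp_smul, ← EOp_smul, ← EOp_smul, ← EOp_sub, h]

lemma key_add {s t u v : ℂ} {A B D : P2} {c₁ c₂ c₃ : ℂ} (hc₁ : c₁ = c₃) (hc₂ : c₂ = c₃)
    (h : s • A + t • B = (u * v) • D) :
    s • EOp A c₁ + t • EOp B c₂ = u • (v • EOp D c₃) := by
  subst hc₁; subst hc₂
  rw [smul_smul, ← EOp_smul, ← EOp_smul, ← EOp_smul, ← EOp_add, h]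

lemma key_eq {s t : ℂ} {A B : P2} {c₁ c₂ : ℂ} (hc : c₁ = c₂)
    (h : s • A = t • B) :
    s • EOp A c₁ = t • EOp B c₂ := by
  subst hc
  rw [← EOp_smul, ← EOp_smul, h]

lemma genL_eq (lam : ℂ) (β : Polynomial ℂ) (m : ℤ) :
    genL lam β m = lam ^ m • EOp (xP + Polynomial.C ((m : ℂ) • β)) ((m : ℤ) : ℂ) := rfl

lemma genH_eq (lam : ℂ) (m : ℤ) : genH lam m = lam ^ m • EOp yP ((m : ℤ) : ℂ) := rfl

lemma omegaGe_eq (lam : ℂ) (k : ℤ) : omegaGe lam k = lam ^ k • EOp 1 ((k : ℂ) + 1/2) := by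
  rw [omegaGe, EOp_one]

lemma omegaGo_eq (lam : ℂ) (β : Polynomial ℂ) (k : ℤ) :
    omegaGo lam β k
      = lam ^ (k+1) • EOp (xP + Polynomial.C (((2*k+1 : ℤ) : ℂ) • β)) ((k : ℂ) + 1/2) := rfl

lemma omegaQo_eq (lam : ℂ) (k : ℤ) :
    omegaQo lam k = lam ^ (k+1) • EOp yP ((k : ℂ) + 1/2) := rfl

/-- `L₀` on either part is multiplication by `x` -/
lemma shiftOp_zero : shiftOp 0 = LinearMap.id := by
  apply LinearMap.ext; intro f
  simp [shiftOp, Polynomial.taylor_zero]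

lemma L0e (lam : ℂ) (β : Polynomial ℂ) : omegaLe lam β 0 = mulOp xP := by
  simp only [omegaLe, genL, Int.cast_zero, zero_smul, map_zero, add_zero, zpow_zero,
    shiftOp_zero, LinearMap.comp_id, one_smul]

lemma L0o (lam : ℂ) (β : Polynomial ℂ) : omegaLo lam β 0 = mulOp xP := by
  simp only [omegaLo, genL, Int.cast_zero, zero_smul, map_zero, add_zero, zpow_zero,
    shiftOp_zero, LinearMap.comp_id, one_smul]

lemma H0 (lam : ℂ) : omegaH lam 0 = mulOp yP := by
  simp only [omegaH, genH, Int.cast_zero, zpow_zero, shiftOp_zero, LinearMap.comp_id, one_smul]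

lemma aeval_yP (a : Polynomial ℂ) : Polynomial.aeval yP a = Polynomial.C a := by
  have h : (Polynomial.aeval yP : Polynomial ℂ →ₐ[ℂ] P2) = Polynomial.CAlgHom := by
    apply Polynomial.algHom_ext
    simp [yP, Polynomial.CAlgHom]
  rw [h]; rfl

lemma evalOne2 (f : P2) : eval2End (mulOp xP) (mulOp yP) f 1 = f := by
  induction f using Polynomial.induction_on' with
  | add p q hp hq =>
      rw [eval2End, Polynomial.eval₂_add]
      rw [LinearMap.add_apply]
      exact congrArg₂ HAdd.hAdd hp hq
  | monomial n a =>
      rw [eval2End, Polynomial.eval₂_monomial]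
      have h1 : (Polynomial.aeval (mulOp yP)).toRingHom a = mulOp (Polynomial.C a) := by
        show Polynomial.aeval ((Algebra.lmul ℂ P2) yP) a = _
        rw [Polynomial.aeval_algHom_apply, aeval_yP]
        rfl
      have h2 : (mulOp xP) ^ n = mulOp (xP ^ n) := by
        rw [mulOp, mulOp]; exact LinearMap.pow_mulLeft ℂ P2 xP n
      rw [h1, h2]
      show Polynomial.C a * (xP ^ n * 1) = _
      rw [mul_one, xP, Polynomial.C_mul_X_pow_eq_monomial]

/-- For every `λ ≠ 0` and `β ∈ ℂ[y]`, the operators of `Ω(λ,β)` form a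
representation of the N=1 Heisenberg-Virasoro superalgebra, and under the action of `ℂ[z,w]`
(`z` acting as `L₀`, `w` as `H₀`) the module `Ω(λ,β)` is free of rank 2 with basis the
constant polynomials `1 ∈ ℂ[x,y]` and `1 ∈ ℂ[s,t]`. -/
theorem statement0 (lam : ℂ) (hlam : lam ≠ 0) (β : Polynomial ℂ) :
    (∃ R : GRep P2 P2,
      R.Le = omegaLe lam β ∧ R.Lo = omegaLo lam β ∧
      R.He = omegaH lam ∧ R.Ho = omegaH lam ∧
      R.Ge = omegaGe lam ∧ R.Go = omegaGo lam β ∧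
      R.Qe = omegaQe ∧ R.Qo = omegaQo lam) ∧
    Function.Bijective (fun fg : P2 × P2 =>
      ((eval2End (omegaLe lam β 0) (omegaH lam 0) fg.1) (1 : P2),
       (eval2End (omegaLo lam β 0) (omegaH lam 0) fg.2) (1 : P2))) := by
  constructor
  · refine ⟨{
      Le := omegaLe lam β, Lo := omegaLo lam β,
      He := omegaH lam, Ho := omegaH lam,
      Ge := omegaGe lam, Go := omegaGo lam β,
      Qe := omegaQe, Qo := omegaQo lam,
      rel_LL_e := ?_, rel_LL_o := ?_, rel_LH_e := ?_, rel_LH_o := ?_,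
      rel_LG_e := ?_, rel_LG_o := ?_, rel_LQ_e := ?_, rel_LQ_o := ?_,
      rel_HG_e := ?_, rel_HG_o := ?_, rel_GG_e := ?_, rel_GG_o := ?_,
      rel_GQ_e := ?_, rel_GQ_o := ?_, rel_HH_e := ?_, rel_HH_o := ?_,
      rel_HQ_e := ?_, rel_HQ_o := ?_, rel_QQ_e := ?_, rel_QQ_o := ?_ },
      rfl, rfl, rfl, rfl, rfl, rfl, rfl, rfl⟩
    · -- LL_e
      intro m n
      simp only [omegaLe, genL_eq, sE_comp]
      apply key_sub (by push_cast; ring) (by push_cast; ring)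
      push_cast
      simp only [zpow_add₀ hlam, zpow_one, xP, yP, smulP2, Polynomial.smul_eq_C_mul,
        taylor_X, taylor_C, taylor_mul, taylor_one, taylor_two, map_add, Polynomial.C_add, Polynomial.C_mul,
        Polynomial.C_sub, Polynomial.C_neg, Polynomial.C_0, Polynomial.C_1, map_ofNat, div_eq_mul_inv,
        one_mul]
      ring
    · -- LL_o
      intro m n
      simp only [omegaLo, genL_eq, sE_comp]
      apply key_sub (by push_cast; ring) (by push_cast; ring)
      push_cast
      simp only [zpow_add₀ hlam, zpow_one, xP, yP, smulP2, Polynomial.smul_eq_C_mul,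
        taylor_X, taylor_C, taylor_mul, taylor_one, taylor_two, map_add, Polynomial.C_add, Polynomial.C_mul,
        Polynomial.C_sub, Polynomial.C_neg, Polynomial.C_0, Polynomial.C_1, map_ofNat, div_eq_mul_inv,
        one_mul]
      ring
    · -- LH_e
      intro m n
      simp only [omegaLe, omegaH, genL_eq, genH_eq, sE_comp]
      apply key_sub (by push_cast; ring) (by push_cast; ring)
      push_cast
      simp only [zpow_add₀ hlam, zpow_one, xP, yP, smulP2, Polynomial.smul_eq_C_mul,
        taylor_X, taylor_C, taylor_mul, taylor_one, taylor_two, map_add, Polynomial.C_add, Polynomial.C_mul,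
        Polynomial.C_sub, Polynomial.C_neg, Polynomial.C_0, Polynomial.C_1, map_ofNat, div_eq_mul_inv,
        one_mul]
      ring
    · -- LH_o
      intro m n
      simp only [omegaLo, omegaH, genL_eq, genH_eq, sE_comp]
      apply key_sub (by push_cast; ring) (by push_cast; ring)
      push_cast
      simp only [zpow_add₀ hlam, zpow_one, xP, yP, smulP2, Polynomial.smul_eq_C_mul,
        taylor_X, taylor_C, taylor_mul, taylor_one, taylor_two, map_add, Polynomial.C_add, Polynomial.C_mul,
        Polynomial.C_sub, Polynomial.C_neg, Polynomial.C_0, Polynomial.C_1, map_ofNat, div_eq_mul_inv,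
        one_mul]
      ring
    · -- LG_e
      intro m k
      simp only [omegaLo, omegaLe, genL_eq, omegaGe_eq, sE_comp]
      apply key_sub (by push_cast; ring) (by push_cast; ring)
      push_cast
      simp only [zpow_add₀ hlam, zpow_one, xP, yP, smulP2, Polynomial.smul_eq_C_mul,
        taylor_X, taylor_C, taylor_mul, taylor_one, taylor_two, map_add, Polynomial.C_add, Polynomial.C_mul,
        Polynomial.C_sub, Polynomial.C_neg, Polynomial.C_0, Polynomial.C_1, map_ofNat, div_eq_mul_inv,
        one_mul]
      ring
    · -- LG_o
      intro m k
      simp only [omegaLe, omegaLo, genL_eq, omegaGo_eq, sE_comp]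
      apply key_sub (by push_cast; ring) (by push_cast; ring)
      push_cast
      simp only [zpow_add₀ hlam, zpow_one, xP, yP, smulP2, Polynomial.smul_eq_C_mul,
        taylor_X, taylor_C, taylor_mul, taylor_one, taylor_two, map_add, Polynomial.C_add, Polynomial.C_mul,
        Polynomial.C_sub, Polynomial.C_neg, Polynomial.C_0, Polynomial.C_1, map_ofNat, div_eq_mul_inv,
        one_mul]
      linear_combination (-(Polynomial.C (Polynomial.C (lam ^ m)) * Polynomial.C (Polynomial.C (lam ^ k)) * Polynomial.C (Polynomial.C lam)) *
        (Polynomial.C (Polynomial.C ((m:ℂ))) * Polynomial.X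
          + Polynomial.C (Polynomial.C ((m:ℂ))) * (Polynomial.C (Polynomial.C ((m:ℂ))) + 2 * Polynomial.C (Polynomial.C ((k:ℂ)))) * Polynomial.C β)) * halfP2
    · -- LQ_e
      intro m k
      apply LinearMap.ext; intro f
      simp [omegaQe]
    · -- LQ_o
      intro m k
      simp only [omegaLe, omegaLo, genL_eq, omegaQo_eq, sE_comp]
      apply key_sub (by push_cast; ring) (by push_cast; ring)
      push_cast
      simp only [zpow_add₀ hlam, zpow_one, xP, yP, smulP2, Polynomial.smul_eq_C_mul,
        taylor_X, taylor_C, taylor_mul, taylor_one, taylor_two, map_add, Polynomial.C_add, Polynomial.C_mul,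
        Polynomial.C_sub, Polynomial.C_neg, Polynomial.C_0, Polynomial.C_1, map_ofNat, div_eq_mul_inv,
        one_mul]
      ring
    · -- HG_e
      intro m k
      simp only [omegaQe, smul_zero]
      have h : omegaH lam m ∘ₗ omegaGe lam k = omegaGe lam k ∘ₗ omegaH lam m := by
        simp only [omegaH, genH_eq, omegaGe_eq, sE_comp]
        apply key_eq (by push_cast; ring)
        push_cast
        simp only [zpow_add₀ hlam, zpow_one, xP, yP, smulP2, Polynomial.smul_eq_C_mul,
          taylor_X, taylor_C, taylor_mul, taylor_one, taylor_two, map_add, Polynomial.C_add,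
          Polynomial.C_mul, Polynomial.C_sub, Polynomial.C_neg, Polynomial.C_0, Polynomial.C_1,
          map_ofNat, div_eq_mul_inv, one_mul]
        ring
      rw [h]
      apply LinearMap.ext; intro f
      simp
    · -- HG_o
      intro m k
      simp only [omegaH, genH_eq, omegaGo_eq, omegaQo_eq, sE_comp]
      apply key_sub (by push_cast; ring) (by push_cast; ring)
      push_cast
      simp only [zpow_add₀ hlam, zpow_one, xP, yP, smulP2, Polynomial.smul_eq_C_mul,
        taylor_X, taylor_C, taylor_mul, taylor_one, taylor_two, map_add, Polynomial.C_add, Polynomial.C_mul,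
        Polynomial.C_sub, Polynomial.C_neg, Polynomial.C_0, Polynomial.C_1, map_ofNat, div_eq_mul_inv,
        one_mul]
      ring
    · -- GG_e
      intro k l
      simp only [omegaLe, genL_eq, omegaGe_eq, omegaGo_eq, sE_comp]
      apply key_add (by push_cast; ring) (by push_cast; ring)
      push_cast
      simp only [zpow_add₀ hlam, zpow_one, xP, yP, smulP2, Polynomial.smul_eq_C_mul,
        taylor_X, taylor_C, taylor_mul, taylor_one, taylor_two, map_add, Polynomial.C_add, Polynomial.C_mul,
        Polynomial.C_sub, Polynomial.C_neg, Polynomial.C_0, Polynomial.C_1, map_ofNat, div_eq_mul_inv,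
        one_mul]
      ring
    · -- GG_o
      intro k l
      simp only [omegaLo, genL_eq, omegaGe_eq, omegaGo_eq, sE_comp]
      apply key_add (by push_cast; ring) (by push_cast; ring)
      push_cast
      simp only [zpow_add₀ hlam, zpow_one, xP, yP, smulP2, Polynomial.smul_eq_C_mul,
        taylor_X, taylor_C, taylor_mul, taylor_one, taylor_two, map_add, Polynomial.C_add, Polynomial.C_mul,
        Polynomial.C_sub, Polynomial.C_neg, Polynomial.C_0, Polynomial.C_1, map_ofNat, div_eq_mul_inv,
        one_mul]
      linear_combination (-(Polynomial.C (Polynomial.C (lam ^ k)) * Polynomial.C (Polynomial.C (lam ^ l)) * Polynomial.C (Polynomial.C lam)) *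
        (Polynomial.C (Polynomial.C ((k:ℂ))) + Polynomial.C (Polynomial.C ((l:ℂ))))) * halfP2
    · -- GQ_e
      intro k l
      simp only [omegaQe, LinearMap.comp_zero, zero_add]
      simp only [omegaH, genH_eq, omegaGe_eq, omegaQo_eq, sE_comp]
      apply key_eq (by push_cast; ring)
      push_cast
      simp only [zpow_add₀ hlam, zpow_one, xP, yP, smulP2, Polynomial.smul_eq_C_mul,
        taylor_X, taylor_C, taylor_mul, taylor_one, taylor_two, map_add, Polynomial.C_add, Polynomial.C_mul,
        Polynomial.C_sub, Polynomial.C_neg, Polynomial.C_0, Polynomial.C_1, map_ofNat, div_eq_mul_inv,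
        one_mul]
      ring
    · -- GQ_o
      intro k l
      simp only [omegaQe, LinearMap.zero_comp, add_zero]
      simp only [omegaH, genH_eq, omegaGe_eq, omegaQo_eq, sE_comp]
      apply key_eq (by push_cast; ring)
      push_cast
      simp only [zpow_add₀ hlam, zpow_one, xP, yP, smulP2, Polynomial.smul_eq_C_mul,
        taylor_X, taylor_C, taylor_mul, taylor_one, taylor_two, map_add, Polynomial.C_add, Polynomial.C_mul,
        Polynomial.C_sub, Polynomial.C_neg, Polynomial.C_0, Polynomial.C_1, map_ofNat, div_eq_mul_inv,
        one_mul]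
      ring
    · -- HH_e
      intro m n
      simp only [omegaH, genH_eq, sE_comp]
      apply key_eq (by push_cast; ring)
      push_cast
      simp only [zpow_add₀ hlam, zpow_one, xP, yP, smulP2, Polynomial.smul_eq_C_mul,
        taylor_X, taylor_C, taylor_mul, taylor_one, taylor_two, map_add, Polynomial.C_add, Polynomial.C_mul,
        Polynomial.C_sub, Polynomial.C_neg, Polynomial.C_0, Polynomial.C_1, map_ofNat, div_eq_mul_inv,
        one_mul]
      ring
    · -- HH_o
      intro m n
      simp only [omegaH, genH_eq, sE_comp]
      apply key_eq (by push_cast; ring)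
      push_cast
      simp only [zpow_add₀ hlam, zpow_one, xP, yP, smulP2, Polynomial.smul_eq_C_mul,
        taylor_X, taylor_C, taylor_mul, taylor_one, taylor_two, map_add, Polynomial.C_add, Polynomial.C_mul,
        Polynomial.C_sub, Polynomial.C_neg, Polynomial.C_0, Polynomial.C_1, map_ofNat, div_eq_mul_inv,
        one_mul]
      ring
    · -- HQ_e
      intro m k
      simp [omegaQe]
    · -- HQ_o
      intro m k
      simp only [omegaH, genH_eq, omegaQo_eq, sE_comp]
      apply key_eq (by push_cast; ring)
      push_cast
      simp only [zpow_add₀ hlam, zpow_one, xP, yP, smulP2, Polynomial.smul_eq_C_mul,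
        taylor_X, taylor_C, taylor_mul, taylor_one, taylor_two, map_add, Polynomial.C_add, Polynomial.C_mul,
        Polynomial.C_sub, Polynomial.C_neg, Polynomial.C_0, Polynomial.C_1, map_ofNat, div_eq_mul_inv,
        one_mul]
      ring
    · -- QQ_e
      intro k l
      simp [omegaQe]
    · -- QQ_o
      intro k l
      simp [omegaQe]
  · have hfun : (fun fg : P2 × P2 =>
        ((eval2End (omegaLe lam β 0) (omegaH lam 0) fg.1) (1 : P2),
         (eval2End (omegaLo lam β 0) (omegaH lam 0) fg.2) (1 : P2))) = id := by
      funext fg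
      rw [L0e, L0o, H0, evalOne2, evalOne2]
      rfl
    rw [hfun]
    exact Function.bijective_id
end
end

section
/- Let M = M₀ ⊕ M₁ carry a representation of 𝔤 with M₀ = ℂ[u,v]·1₀ and M₁ = ℂ[u,v]·1₁ (each a copy of the polynomial ring in two variables), and suppose there are nonzero λ, λ̂ ∈ ℂ and polynomials β, β̂ ∈ ℂ[v] such that for all m ∈ ℤ and all f ∈ ℂ[u,v]: L_m(f·1₀) = λ^m(u + mβ(v))f(u+m, v)·1₀, H_m(f·1₀) = λ^m v f(u+m, v)·1₀, L_m(f·1₁) = λ̂^m(u + mβ̂(v))f(u+m, v)·1₁, and H_m(f·1₁) = λ̂^m v f(u+m, v)·1₁. Then λ = λ̂, and exactly one of the following holds: (1) β̂ = β − 1/2 and there exist nonzero complex numbers c_p (p ∈ ℤ + 1/2) such that G_p(1₀) = (λ^{2p}/c_p)(u + 2p(β(v) − 1/2))·1₁ and G_p(1₁) = c_p·1₀; or (2) β̂ = β + 1/2 and there exist nonzero complex numbers α_p (p ∈ ℤ + 1/2) such that G_p(1₀) = α_p·1₁ and G_p(1₁) = (λ^{2p}/α_p)(u + 2pβ(v))·1₀.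 -/
open Polynomial

noncomputable section

-- aux lemmas
lemma smul_P2 (r : ℂ) (f : P2) : r • f = Polynomial.C (Polynomial.C r) * f := by
  rw [← algebraMap_smul (Polynomial ℂ) r f, Polynomial.algebraMap_eq, smul_eq_C_mul]

lemma shiftOp_apply (c : ℂ) (f : P2) : shiftOp c f = taylor (Polynomial.C c) f := rfl
lemma shiftOp_one (c : ℂ) : shiftOp c (1 : P2) = 1 := by
  rw [shiftOp_apply, ← Polynomial.C_1, taylor_C]
lemma shiftOp_mul (c : ℂ) (f g : P2) : shiftOp c (f * g) = shiftOp c f * shiftOp c g := by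
  simp [shiftOp_apply, taylor_mul]
lemma shiftOp_X (c : ℂ) : shiftOp c xP = xP + Polynomial.C (Polynomial.C c) := by
  simp [shiftOp_apply, xP, taylor_X]
lemma shiftOp_X' (c : ℂ) : shiftOp c (Polynomial.X) = Polynomial.X + Polynomial.C (Polynomial.C c) := by
  simp [shiftOp_apply, taylor_X]
lemma shiftOp_C (c : ℂ) (a : Polynomial ℂ) :
    shiftOp c (Polynomial.C a) = Polynomial.C a := by
  simp [shiftOp_apply, taylor_C]
lemma shiftOp_zero_s2 (f : P2) : shiftOp 0 f = f := by
  simp [shiftOp_apply, taylor_zero]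
lemma shiftOp_natDegree (c : ℂ) (f : P2) : (shiftOp c f).natDegree = f.natDegree := by
  simp [shiftOp_apply, natDegree_taylor]

lemma genL_zero (lam : ℂ) (β : Polynomial ℂ) (f : P2) : genL lam β 0 f = xP * f := by
  simp [genL, mulOp, shiftOp_zero_s2]

lemma genH_zero (lam : ℂ) (f : P2) : genH lam 0 f = yP * f := by
  simp [genH, mulOp, shiftOp_zero_s2]

lemma genL_one (lam : ℂ) (β : Polynomial ℂ) (m : ℤ) :
    genL lam β m (1 : P2) = lam ^ m • (xP + Polynomial.C ((m : ℂ) • β)) := by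
  simp [genL, mulOp, shiftOp_one]

lemma semilinear (T : P2 →ₗ[ℂ] P2) (p : ℂ)
    (hx : ∀ f, T (xP * f) = (xP + Polynomial.C (Polynomial.C p)) * T f)
    (hy : ∀ f, T (yP * f) = yP * T f) (f : P2) :
    T f = shiftOp p f * T 1 := by
  have hC : ∀ (a : Polynomial ℂ) (f : P2), T (Polynomial.C a * f) = Polynomial.C a * T f := by
    intro a
    induction a using Polynomial.induction_on with
    | C r =>
      intro f
      rw [← smul_P2, map_smul, smul_P2]
    | add a b ha hb =>
      intro f
      rw [map_add, add_mul, map_add, ha, hb, add_mul]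
    | monomial n r ih =>
      intro f
      have e : ∀ g : P2, (Polynomial.C (Polynomial.C r * Polynomial.X ^ (n + 1)) : P2) * g
          = yP * (Polynomial.C (Polynomial.C r * Polynomial.X ^ n) * g) := by
        intro g; simp only [yP, map_mul, map_pow, pow_succ]; ring
      rw [e f, hy, ih, ← e (T f)]
  induction f using Polynomial.induction_on with
  | C a =>
    have := hC a 1
    rw [mul_one] at this
    rw [this, shiftOp_C, mul_comm]
  | add a b ha hb => rw [map_add, ha, hb, map_add, add_mul]
  | monomial n a ih =>
    have e : (Polynomial.C a * Polynomial.X ^ (n + 1) : P2)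
        = xP * (Polynomial.C a * Polynomial.X ^ n) := by
      simp only [xP, pow_succ]; ring
    rw [e, hx, ih]
    simp only [shiftOp_mul, shiftOp_X, shiftOp_C]
    ring

lemma linear_coeffs (u v u' v' : Polynomial ℂ)
    (h : Polynomial.C u * Polynomial.X + Polynomial.C v
       = Polynomial.C u' * Polynomial.X + Polynomial.C v') : u = u' ∧ v = v' := by
  constructor
  · have := congrArg (fun q : P2 => q.coeff 1) h
    simpa using this
  · have := congrArg (fun q : P2 => q.coeff 0) h
    simpa using this

lemma X_add_C_ne_zero' (b : Polynomial ℂ) : (Polynomial.X + Polynomial.C b : P2) ≠ 0 :=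
  Polynomial.X_add_C_ne_zero b

lemma halfcore (p lam1 lam2 : ℂ) (h1 : lam1 ≠ 0)
    (b1 b2 : Polynomial ℂ) (g h : P2)
    (e1 : shiftOp p g * h = lam1 • (Polynomial.X + Polynomial.C b1))
    (e2 : shiftOp p h * g = lam2 • (Polynomial.X + Polynomial.C b2))
    (hdh : h.natDegree = 0) :
    lam1 = lam2 ∧ ∃ γ : ℂ, γ ≠ 0 ∧ h = Polynomial.C (Polynomial.C γ) ∧
      g = (lam1/γ) • (Polynomial.X + Polynomial.C b2) ∧ b1 - b2 = Polynomial.C p := by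
  have hne : shiftOp p g * h ≠ 0 := by
    rw [e1]
    exact smul_ne_zero h1 (X_add_C_ne_zero' b1)
  have hgne : shiftOp p g ≠ 0 := left_ne_zero_of_mul hne
  have hhne : h ≠ 0 := right_ne_zero_of_mul hne
  have hdeg : (shiftOp p g).natDegree + h.natDegree = 1 := by
    rw [← Polynomial.natDegree_mul hgne hhne, e1, smul_P2,
      Polynomial.natDegree_mul (by simpa using h1) (X_add_C_ne_zero' b1)]
    simp
  have hdg : g.natDegree = 1 := by
    rw [shiftOp_natDegree] at hdeg
    omega
  -- decompose
  have hh : h = Polynomial.C (h.coeff 0) := Polynomial.eq_C_of_natDegree_eq_zero hdh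
  set c := h.coeff 0 with hc
  set A := g.coeff 1 with hA
  set B := g.coeff 0 with hB
  have hg : g = Polynomial.C A * Polynomial.X + Polynomial.C B :=
    Polynomial.eq_X_add_C_of_natDegree_le_one hdg.le
  rw [hg, hh] at e1
  simp only [map_add, shiftOp_mul, shiftOp_C, shiftOp_X', smul_P2] at e1
  rw [hg, hh, shiftOp_C, smul_P2] at e2
  have E1 : Polynomial.C (A * c) * Polynomial.X
      + Polynomial.C ((A * Polynomial.C p + B) * c)
      = Polynomial.C (Polynomial.C lam1) * Polynomial.X
      + Polynomial.C (Polynomial.C lam1 * b1) := by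
    simp only [map_mul, map_add]
    linear_combination e1
  have E2 : Polynomial.C (c * A) * Polynomial.X + Polynomial.C (c * B)
      = Polynomial.C (Polynomial.C lam2) * Polynomial.X
      + Polynomial.C (Polynomial.C lam2 * b2) := by
    simp only [map_mul, map_add]
    linear_combination e2
  obtain ⟨i1, i2⟩ := linear_coeffs _ _ _ _ E1
  obtain ⟨j1, j2⟩ := linear_coeffs _ _ _ _ E2
  have hlam12 : lam1 = lam2 := by
    have : (Polynomial.C lam1 : Polynomial ℂ) = Polynomial.C lam2 := by
      rw [← i1, ← j1]; ring
    exact Polynomial.C_injective this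
  refine ⟨hlam12, ?_⟩
  have hCl1 : (Polynomial.C lam1 : Polynomial ℂ) ≠ 0 := by simpa using h1
  have hAne : A ≠ 0 := by
    intro h0; rw [h0, zero_mul] at i1; exact hCl1 i1.symm
  have hcne : c ≠ 0 := by
    intro h0; rw [h0, mul_zero] at i1; exact hCl1 i1.symm
  have hdegAc : A.natDegree + c.natDegree = 0 := by
    rw [← Polynomial.natDegree_mul hAne hcne, i1, Polynomial.natDegree_C]
  have hAc : A = Polynomial.C (A.coeff 0) :=
    Polynomial.eq_C_of_natDegree_eq_zero (by omega)
  have hcc : c = Polynomial.C (c.coeff 0) :=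
    Polynomial.eq_C_of_natDegree_eq_zero (by omega)
  set α := A.coeff 0 with hα
  set γ := c.coeff 0 with hγ
  have hγne : γ ≠ 0 := fun h0 => hcne (by rw [hcc, h0, map_zero])
  have hαγ : α * γ = lam1 := by
    have : (Polynomial.C (α * γ) : Polynomial ℂ) = Polynomial.C lam1 := by
      rw [map_mul, ← hAc, ← hcc, i1]
    exact Polynomial.C_injective this
  have hαval : α = lam1 / γ := eq_div_of_mul_eq hγne hαγ
  refine ⟨γ, hγne, by rw [hh, hcc], ?_, ?_⟩
  · -- g = (lam1/γ) • (X + C b2)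
    have hBeq : B = Polynomial.C α * b2 := by
      have step : Polynomial.C γ * B = Polynomial.C γ * (Polynomial.C α * b2) := by
        calc Polynomial.C γ * B = c * B := by rw [← hcc]
        _ = Polynomial.C lam2 * b2 := j2
        _ = Polynomial.C γ * (Polynomial.C α * b2) := by
            rw [← hlam12, ← hαγ]; push_cast [map_mul]; ring
      exact mul_left_cancel₀ (by simpa using hγne) step
    rw [hg, smul_P2, hAc, hBeq, ← hαval]
    push_cast [map_mul]
    ring
  · -- b1 - b2 = C p
    have step : Polynomial.C lam1 * (b1 - b2) = Polynomial.C lam1 * Polynomial.C p := by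
      have : (A * Polynomial.C p + B) * c - c * B
          = Polynomial.C lam1 * b1 - Polynomial.C lam2 * b2 := by
        rw [i2, j2]
      calc Polynomial.C lam1 * (b1 - b2)
          = Polynomial.C lam1 * b1 - Polynomial.C lam2 * b2 := by rw [← hlam12]; ring
        _ = (A * Polynomial.C p + B) * c - c * B := this.symm
        _ = (A * c) * Polynomial.C p := by ring
        _ = Polynomial.C lam1 * Polynomial.C p := by rw [i1]
    exact mul_left_cancel₀ hCl1 step

lemma xP_def : xP = Polynomial.X := rfl

lemma perk (lam lamh : ℂ) (hlam : lam ≠ 0) (hlamh : lamh ≠ 0)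
    (β βh : Polynomial ℂ) (R : GRep P2 P2)
    (hLe : ∀ m : ℤ, R.Le m = genL lam β m)
    (hHe : ∀ m : ℤ, R.He m = genH lam m)
    (hLo : ∀ m : ℤ, R.Lo m = genL lamh βh m)
    (hHo : ∀ m : ℤ, R.Ho m = genH lamh m) (k : ℤ) :
    (βh = β - Polynomial.C (1/2) ∧ lam ^ (2*k+1) = lamh ^ (2*k+1) ∧ ∃ γ : ℂ, γ ≠ 0 ∧
        R.Go k 1 = γ • (1:P2) ∧
        R.Ge k 1 = (lam ^ (2*k+1) / γ) •
          (xP + Polynomial.C (((2*k+1:ℤ):ℂ) • (β - Polynomial.C (1/2)))))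
    ∨ (βh = β + Polynomial.C (1/2) ∧ lam ^ (2*k+1) = lamh ^ (2*k+1) ∧ ∃ γ : ℂ, γ ≠ 0 ∧
        R.Ge k 1 = γ • (1:P2) ∧
        R.Go k 1 = (lam ^ (2*k+1) / γ) •
          (xP + Polynomial.C (((2*k+1:ℤ):ℂ) • β))) := by
  set p : ℂ := (k:ℂ) + 1/2 with hp
  -- semilinearity inputs for Ge k
  have hx_e : ∀ f, R.Ge k (xP * f) = (xP + Polynomial.C (Polynomial.C p)) * R.Ge k f := by
    intro f
    have rel := LinearMap.ext_iff.mp (R.rel_LG_e 0 k) f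
    simp only [LinearMap.sub_apply, LinearMap.comp_apply, LinearMap.smul_apply, hLo, hLe,
      genL_zero, zero_add, Int.cast_zero] at rel
    have h0 : ((0:ℂ)/2 - ((k:ℂ)+1/2)) = -p := by rw [hp]; ring
    rw [h0, neg_smul, smul_P2] at rel
    linear_combination -rel
  have hy_e : ∀ f, R.Ge k (yP * f) = yP * R.Ge k f := by
    intro f
    have rel := LinearMap.ext_iff.mp (R.rel_HG_e 0 k) f
    simp only [LinearMap.sub_apply, LinearMap.comp_apply, LinearMap.smul_apply, hHo, hHe,
      genH_zero, zero_add, Int.cast_zero, zero_smul, LinearMap.zero_apply] at rel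
    linear_combination -rel
  have hx_o : ∀ f, R.Go k (xP * f) = (xP + Polynomial.C (Polynomial.C p)) * R.Go k f := by
    intro f
    have rel := LinearMap.ext_iff.mp (R.rel_LG_o 0 k) f
    simp only [LinearMap.sub_apply, LinearMap.comp_apply, LinearMap.smul_apply, hLo, hLe,
      genL_zero, zero_add, Int.cast_zero] at rel
    have h0 : ((0:ℂ)/2 - ((k:ℂ)+1/2)) = -p := by rw [hp]; ring
    rw [h0, neg_smul, smul_P2] at rel
    linear_combination -rel
  have hy_o : ∀ f, R.Go k (yP * f) = yP * R.Go k f := by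
    intro f
    have rel := LinearMap.ext_iff.mp (R.rel_HG_o 0 k) f
    simp only [LinearMap.sub_apply, LinearMap.comp_apply, LinearMap.smul_apply, hHo, hHe,
      genH_zero, zero_add, Int.cast_zero, zero_smul, LinearMap.zero_apply] at rel
    linear_combination -rel
  set g : P2 := R.Ge k 1 with hgdef
  set h : P2 := R.Go k 1 with hhdef
  have gsemi : ∀ f, R.Ge k f = shiftOp p f * g := fun f => semilinear (R.Ge k) p hx_e hy_e f
  have osemi : ∀ f, R.Go k f = shiftOp p f * h := fun f => semilinear (R.Go k) p hx_o hy_o f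
  -- the two GG relations at 1
  have e1 : shiftOp p g * h
      = lam ^ (2*k+1) • (Polynomial.X + Polynomial.C (((2*k+1:ℤ):ℂ) • β)) := by
    have rel := LinearMap.ext_iff.mp (R.rel_GG_e k k) (1 : P2)
    simp only [LinearMap.add_apply, LinearMap.comp_apply, LinearMap.smul_apply, hLe] at rel
    rw [show k + k + 1 = 2*k+1 by ring, genL_one, osemi, ← hgdef, ← two_smul ℂ] at rel
    have := smul_right_injective P2 (two_ne_zero' ℂ) rel
    rw [this, xP_def]
  have e2 : shiftOp p h * g
      = lamh ^ (2*k+1) • (Polynomial.X + Polynomial.C (((2*k+1:ℤ):ℂ) • βh)) := by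
    have rel := LinearMap.ext_iff.mp (R.rel_GG_o k k) (1 : P2)
    simp only [LinearMap.add_apply, LinearMap.comp_apply, LinearMap.smul_apply, hLo] at rel
    rw [show k + k + 1 = 2*k+1 by ring, genL_one, gsemi, ← hhdef, ← two_smul ℂ] at rel
    have := smul_right_injective P2 (two_ne_zero' ℂ) rel
    rw [this, xP_def]
  -- degree dichotomy
  have hne : shiftOp p g * h ≠ 0 := by
    rw [e1]
    exact smul_ne_zero (zpow_ne_zero _ hlam) (X_add_C_ne_zero' _)
  have hdeg : (shiftOp p g).natDegree + h.natDegree = 1 := by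
    rw [← Polynomial.natDegree_mul (left_ne_zero_of_mul hne) (right_ne_zero_of_mul hne), e1,
      smul_P2, Polynomial.natDegree_mul (by simpa using zpow_ne_zero (2*k+1) hlam)
      (X_add_C_ne_zero' _)]
    simp
  rw [shiftOp_natDegree] at hdeg
  have h2k1 : ((2*k+1:ℤ):ℂ) ≠ 0 := by
    exact_mod_cast (by omega : (2*k+1:ℤ) ≠ 0)
  have hdich : h.natDegree = 0 ∨ g.natDegree = 0 := by omega
  rcases hdich with hdh | hdg
  · -- case 1
    obtain ⟨hl, γ, hγ, hh, hgval, hb⟩ := halfcore p _ _ (zpow_ne_zero _ hlam) _ _ g h e1 e2 hdh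
    have key : ((2*k+1:ℤ):ℂ) • (β - βh) = ((2*k+1:ℤ):ℂ) • (Polynomial.C (1/2 : ℂ)) := by
      rw [smul_sub, hb, Polynomial.smul_C, smul_eq_mul]
      congr 1
      rw [hp]; push_cast; ring
    have hsub : β - βh = Polynomial.C (1/2 : ℂ) := smul_right_injective (Polynomial ℂ) h2k1 key
    have hβh : βh = β - Polynomial.C (1/2 : ℂ) := by linear_combination -hsub
    refine Or.inl ⟨hβh, hl, γ, hγ, ?_, ?_⟩
    · rw [hh, smul_P2, mul_one]
    · rw [hgval, xP_def, hβh]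
  · -- case 2
    obtain ⟨hl, γ, hγ, hh, hgval, hb⟩ :=
      halfcore p _ _ (zpow_ne_zero _ hlamh) _ _ h g e2 e1 hdg
    have key : ((2*k+1:ℤ):ℂ) • (βh - β) = ((2*k+1:ℤ):ℂ) • (Polynomial.C (1/2 : ℂ)) := by
      rw [smul_sub, hb, Polynomial.smul_C, smul_eq_mul]
      congr 1
      rw [hp]; push_cast; ring
    have hsub : βh - β = Polynomial.C (1/2 : ℂ) := smul_right_injective (Polynomial ℂ) h2k1 key
    have hβh : βh = β + Polynomial.C (1/2 : ℂ) := by linear_combination hsub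
    refine Or.inr ⟨hβh, hl.symm, γ, hγ, ?_, ?_⟩
    · rw [hh, smul_P2, mul_one]
    · rw [hgval, xP_def, hl.symm]


/-- If a `𝔤`-module structure on `ℂ[u,v]·1₀ ⊕ ℂ[u,v]·1₁` restricts on each
graded component to the Heisenberg-Virasoro action with parameters `(λ, β)` resp. `(λ̂, β̂)`,
then `λ = λ̂` and exactly one of the two listed possibilities for `G_p(1₀)`, `G_p(1₁)` and `β̂`
occurs.  (The odd index `k : ℤ` encodes `p = k + 1/2`, so `λ^{2p} = λ^{2k+1}`.) -/
theorem statement2 (lam lamh : ℂ) (hlam : lam ≠ 0) (hlamh : lamh ≠ 0)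
    (β βh : Polynomial ℂ) (R : GRep P2 P2)
    (hLe : ∀ m : ℤ, R.Le m = genL lam β m)
    (hHe : ∀ m : ℤ, R.He m = genH lam m)
    (hLo : ∀ m : ℤ, R.Lo m = genL lamh βh m)
    (hHo : ∀ m : ℤ, R.Ho m = genH lamh m) :
    lam = lamh ∧
    Xor'
      (βh = β - Polynomial.C (1/2) ∧ ∃ c : ℤ → ℂ, (∀ k, c k ≠ 0) ∧ ∀ k : ℤ,
        R.Ge k 1 = (lam ^ (2*k+1) / c k) •
          (xP + Polynomial.C (((2*k+1 : ℤ) : ℂ) • (β - Polynomial.C (1/2)))) ∧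
        R.Go k 1 = c k • (1 : P2))
      (βh = β + Polynomial.C (1/2) ∧ ∃ a : ℤ → ℂ, (∀ k, a k ≠ 0) ∧ ∀ k : ℤ,
        R.Ge k 1 = a k • (1 : P2) ∧
        R.Go k 1 = (lam ^ (2*k+1) / a k) •
          (xP + Polynomial.C (((2*k+1 : ℤ) : ℂ) • β))) := by
  have hk := perk lam lamh hlam hlamh β βh R hLe hHe hLo hHo
  have hexcl : ¬ (β - Polynomial.C (1/2 : ℂ) = β + Polynomial.C (1/2 : ℂ)) := by
    intro hcontra
    have h2 : (Polynomial.C (1/2 : ℂ) : Polynomial ℂ) = Polynomial.C (-(1/2) : ℂ) := by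
      rw [map_neg]
      linear_combination -hcontra
    have := Polynomial.C_injective h2
    norm_num at this
  rcases hk 0 with ⟨hβ0, hl0, _⟩ | ⟨hβ0, hl0, _⟩
  · have hlameq : lam = lamh := by
      have h1 : (2 * (0:ℤ) + 1) = 1 := by norm_num
      rw [h1, zpow_one, zpow_one] at hl0
      exact hl0
    have hall : ∀ k : ℤ, ∃ γ : ℂ, γ ≠ 0 ∧ R.Go k 1 = γ • (1:P2) ∧
        R.Ge k 1 = (lam ^ (2*k+1) / γ) •
          (xP + Polynomial.C (((2*k+1:ℤ):ℂ) • (β - Polynomial.C (1/2)))) := by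
      intro k
      rcases hk k with ⟨_, _, γ, hγ, h1, h2⟩ | ⟨hβk, _, _⟩
      · exact ⟨γ, hγ, h1, h2⟩
      · exact absurd (hβ0.symm.trans hβk) hexcl
    choose c hc using hall
    exact ⟨hlameq, Or.inl ⟨⟨hβ0, c, fun k => (hc k).1,
      fun k => ⟨(hc k).2.2, (hc k).2.1⟩⟩,
      fun hc2 => hexcl (hβ0.symm.trans hc2.1)⟩⟩
  · have hlameq : lam = lamh := by
      have h1 : (2 * (0:ℤ) + 1) = 1 := by norm_num
      rw [h1, zpow_one, zpow_one] at hl0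
      exact hl0
    have hall : ∀ k : ℤ, ∃ γ : ℂ, γ ≠ 0 ∧ R.Ge k 1 = γ • (1:P2) ∧
        R.Go k 1 = (lam ^ (2*k+1) / γ) •
          (xP + Polynomial.C (((2*k+1:ℤ):ℂ) • β)) := by
      intro k
      rcases hk k with ⟨hβk, _, _⟩ | ⟨_, _, γ, hγ, h1, h2⟩
      · exact absurd (hβk.symm.trans hβ0) hexcl
      · exact ⟨γ, hγ, h1, h2⟩
    choose a ha using hall
    exact ⟨hlameq, Or.inr ⟨⟨hβ0, a, fun k => (ha k).1,
      fun k => ⟨(ha k).2.1, (ha k).2.2⟩⟩,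
      fun hc1 => hexcl (hc1.1.symm.trans hβ0)⟩⟩
end
end

section
/- For nonzero complex numbers λ, λ′ and polynomials β, β′ ∈ ℂ[y], the 𝔤-modules Ω(λ,β) and Ω(λ′,β′) are isomorphic if and only if λ = λ′ and β = β′. -/
open Polynomial

noncomputable section

/-- `Ω(λ,β) ≅ Ω(λ',β')` as `𝔤`-modules: there is a grading-preserving linear bijection
commuting with all the operators `L_m`, `H_m`, `G_p`, `Q_p`. -/
def OmegaEquiv (lam lam' : ℂ) (β β' : Polynomial ℂ) : Prop :=
  ∃ (e₀ e₁ : P2 ≃ₗ[ℂ] P2),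
    (∀ (m : ℤ) (f : P2), e₀ (omegaLe lam β m f) = omegaLe lam' β' m (e₀ f)) ∧
    (∀ (m : ℤ) (f : P2), e₁ (omegaLo lam β m f) = omegaLo lam' β' m (e₁ f)) ∧
    (∀ (m : ℤ) (f : P2), e₀ (omegaH lam m f) = omegaH lam' m (e₀ f)) ∧
    (∀ (m : ℤ) (f : P2), e₁ (omegaH lam m f) = omegaH lam' m (e₁ f)) ∧
    (∀ (k : ℤ) (f : P2), e₁ (omegaGe lam k f) = omegaGe lam' k (e₀ f)) ∧
    (∀ (k : ℤ) (f : P2), e₀ (omegaGo lam β k f) = omegaGo lam' β' k (e₁ f)) ∧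
    (∀ (k : ℤ) (f : P2), e₁ (omegaQe k f) = omegaQe k (e₀ f)) ∧
    (∀ (k : ℤ) (f : P2), e₀ (omegaQo lam k f) = omegaQo lam' k (e₁ f))

lemma smul_eq_CC_mul (c : ℂ) (g : P2) : c • g = Polynomial.C (Polynomial.C c) * g := by
  rw [Algebra.smul_def]
  congr 1

/-- A ℂ-linear operator on `ℂ[x,y]` commuting with multiplication by `x` and `y`
is multiplication by `T 1`. -/
lemma comm_mul (T : P2 →ₗ[ℂ] P2)
    (hx : ∀ f, T (Polynomial.X * f) = Polynomial.X * T f)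
    (hy : ∀ f, T (Polynomial.C Polynomial.X * f) = Polynomial.C Polynomial.X * T f)
    (f : P2) : T f = f * T 1 := by
  have key : ∀ p : P2, ∀ g, T (p * g) = p * T g := by
    intro p
    induction p using Polynomial.induction_on with
    | C a =>
      induction a using Polynomial.induction_on with
      | C c =>
        intro g
        rw [← smul_eq_CC_mul, map_smul, smul_eq_CC_mul]
      | add a b ha hb =>
        intro g
        have : (Polynomial.C (a + b) : P2) * g
            = Polynomial.C a * g + Polynomial.C b * g := by
          rw [map_add, add_mul]
        rw [this, map_add, ha, hb, map_add, add_mul]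
      | monomial n a ih =>
        intro g
        have h1 : (Polynomial.C (Polynomial.C a * Polynomial.X ^ (n + 1)) : P2)
            = Polynomial.C (Polynomial.C a * Polynomial.X ^ n) *
              Polynomial.C Polynomial.X := by
          rw [← map_mul, mul_assoc, pow_succ]
        rw [h1, mul_assoc, ih, hy]; ring
    | add p q hp hq =>
      intro g
      rw [add_mul, map_add, hp, hq, ← add_mul]
    | monomial n a ih =>
      intro g
      have h1 : (Polynomial.C a : P2) * Polynomial.X ^ (n + 1)
          = Polynomial.C a * Polynomial.X ^ n * Polynomial.X := by
        rw [pow_succ, mul_assoc]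
      rw [h1, mul_assoc, ih, hx]; ring
  calc T f = T (f * 1) := by rw [mul_one]
    _ = f * T 1 := key f 1

lemma omegaLe_zero (lam : ℂ) (β : Polynomial ℂ) (f : P2) :
    omegaLe lam β 0 f = Polynomial.X * f := by
  simp [omegaLe, genL, mulOp, shiftOp, xP, Polynomial.taylor_zero']

lemma omegaH_zero (lam : ℂ) (f : P2) :
    omegaH lam 0 f = Polynomial.C Polynomial.X * f := by
  simp [omegaH, genH, mulOp, shiftOp, yP, Polynomial.taylor_zero']

lemma omegaLe_one_apply (lam : ℂ) (β : Polynomial ℂ) (f : P2) :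
    omegaLe lam β 1 f
      = lam • ((Polynomial.X + Polynomial.C β) * Polynomial.taylor (Polynomial.C 1) f) := by
  simp [omegaLe, genL, mulOp, shiftOp, xP]

/-- `Ω(λ,β) ≅ Ω(λ',β')` as `𝔤`-modules iff `λ = λ'` and `β = β'`. -/
theorem statement6 (lam lam' : ℂ) (hlam : lam ≠ 0) (hlam' : lam' ≠ 0)
    (β β' : Polynomial ℂ) :
    OmegaEquiv lam lam' β β' ↔ (lam = lam' ∧ β = β') := by
  constructor
  · rintro ⟨e₀, e₁, hL, -, hH, -, -, -, -, -⟩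
    -- e₀ commutes with multiplication by x and y
    have hx : ∀ f : P2, e₀ (Polynomial.X * f) = Polynomial.X * e₀ f := by
      intro f
      have := hL 0 f
      rwa [omegaLe_zero, omegaLe_zero] at this
    have hy : ∀ f : P2, e₀ (Polynomial.C Polynomial.X * f)
        = Polynomial.C Polynomial.X * e₀ f := by
      intro f
      have := hH 0 f
      rwa [omegaH_zero, omegaH_zero] at this
    have hmul : ∀ f : P2, e₀ f = f * e₀ 1 :=
      comm_mul (e₀ : P2 →ₗ[ℂ] P2) hx hy
    set c : P2 := e₀ 1 with hc
    -- c is a unit, hence a constant (in the outer variable)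
    have hunit : IsUnit c := by
      obtain ⟨g, hg⟩ := e₀.surjective 1
      have : g * c = 1 := by rw [← hmul g, hg]
      exact IsUnit.of_mul_eq_one (a := c) g (by rw [mul_comm]; exact this)
    obtain ⟨r, -, hr⟩ := Polynomial.isUnit_iff.mp hunit
    have hc0 : c ≠ 0 := hunit.ne_zero
    -- the m = 1 relation at f = 1
    have htc : Polynomial.taylor (Polynomial.C (1 : ℂ)) c = c := by
      rw [← hr, Polynomial.taylor_C]
    have h1 := hL 1 1
    rw [omegaLe_one_apply, omegaLe_one_apply, Polynomial.taylor_one, hmul, hmul,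
      one_mul, htc] at h1
    -- h1 : lam • ((X + C β) * C 1) * c = lam' • ((X + C β') * c)
    have h2 : lam • ((Polynomial.X + Polynomial.C β) * c)
        = lam' • ((Polynomial.X + Polynomial.C β') * c) := by
      have := h1
      rw [Polynomial.C_1, mul_one] at this
      rw [← this, smul_mul_assoc]
    have h3 : lam • (Polynomial.X + Polynomial.C β)
        = lam' • (Polynomial.X + Polynomial.C β') := by
      apply mul_right_cancel₀ hc0
      rw [smul_mul_assoc, smul_mul_assoc]
      exact h2
    have hll : lam = lam' := by
      have := congrArg (fun p : P2 => p.coeff 1) h3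
      simp only [Polynomial.coeff_smul, Polynomial.coeff_add, Polynomial.coeff_X_one,
        Polynomial.coeff_C, one_ne_zero, if_false, add_zero] at this
      have : Polynomial.C lam = Polynomial.C lam' := by
        simpa [Polynomial.smul_eq_C_mul] using this
      exact Polynomial.C_injective this
    refine ⟨hll, ?_⟩
    rw [hll] at h3
    have h4 : (Polynomial.X + Polynomial.C β : P2)
        = Polynomial.X + Polynomial.C β' :=
      smul_right_injective P2 (hll ▸ hlam) h3
    have := add_left_cancel h4
    exact Polynomial.C_injective this
  · rintro ⟨rfl, rfl⟩
    exact ⟨LinearEquiv.refl ℂ P2, LinearEquiv.refl ℂ P2, fun _ _ => rfl, fun _ _ => rfl,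
      fun _ _ => rfl, fun _ _ => rfl, fun _ _ => rfl, fun _ _ => rfl,
      fun _ _ => rfl, fun _ _ => rfl⟩
end
end

section
/- Let λ be a nonzero complex number and β ∈ ℂ[y] with β(0) ≠ 0. Then a graded subspace F = F₀ ⊕ F₁ of Ω(λ,β) is a submodule if and only if F = R_g for some g ∈ ℂ[y]; moreover R_g ⊆ R_ĝ whenever ĝ divides g. -/
open Polynomial

noncomputable section

/-- `F₀ ⊕ F₁` is a (graded) submodule of `Ω(λ,β)`: it is invariant under all the operators
`L_m`, `H_m`, `G_p`, `Q_p`. -/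
def IsOmegaSub (lam : ℂ) (β : Polynomial ℂ) (F₀ F₁ : Submodule ℂ P2) : Prop :=
  (∀ m : ℤ, ∀ f ∈ F₀, omegaLe lam β m f ∈ F₀) ∧
  (∀ m : ℤ, ∀ f ∈ F₁, omegaLo lam β m f ∈ F₁) ∧
  (∀ m : ℤ, ∀ f ∈ F₀, omegaH lam m f ∈ F₀) ∧
  (∀ m : ℤ, ∀ f ∈ F₁, omegaH lam m f ∈ F₁) ∧
  (∀ k : ℤ, ∀ f ∈ F₀, omegaGe lam k f ∈ F₁) ∧
  (∀ k : ℤ, ∀ f ∈ F₁, omegaGo lam β k f ∈ F₀) ∧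
  (∀ k : ℤ, ∀ f ∈ F₀, omegaQe k f ∈ F₁) ∧
  (∀ k : ℤ, ∀ f ∈ F₁, omegaQo lam k f ∈ F₀)


namespace S7

/-! ### basic facts about `Rg` and `taylor` -/

lemma mem_Rg {g : Polynomial ℂ} {f : P2} : f ∈ Rg g ↔ (C g : P2) ∣ f := by
  constructor
  · rintro ⟨h, rfl⟩; exact ⟨h, rfl⟩
  · rintro ⟨h, rfl⟩; exact ⟨h, rfl⟩

lemma taylor_C_mul (r g : Polynomial ℂ) (h : P2) :
    taylor r (C g * h) = C g * taylor r h := by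
  rw [taylor_mul, taylor_C]

lemma C_dvd_taylor {g : Polynomial ℂ} {f : P2} (r : Polynomial ℂ) (hd : (C g : P2) ∣ f) :
    (C g : P2) ∣ taylor r f := by
  obtain ⟨h, rfl⟩ := hd
  exact ⟨taylor r h, taylor_C_mul r g h⟩

lemma C_dvd_of_taylor {g : Polynomial ℂ} {f : P2} (r : Polynomial ℂ)
    (hd : (C g : P2) ∣ taylor r f) : (C g : P2) ∣ f := by
  have h2 := C_dvd_taylor (-r) hd
  rwa [taylor_taylor, neg_add_cancel, taylor_zero] at h2

lemma smul_eq_CC (c : ℂ) (f : P2) : c • f = C (C c) * f := by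
  rw [Algebra.smul_def]
  rfl

lemma C_dvd_smul {g : Polynomial ℂ} {f : P2} (e : ℂ) (hd : (C g : P2) ∣ f) :
    (C g : P2) ∣ e • f := by
  rw [smul_eq_CC]
  exact hd.mul_left _

lemma C_dvd_of_smul {g : Polynomial ℂ} {f : P2} {e : ℂ} (he : e ≠ 0)
    (hd : (C g : P2) ∣ e • f) : (C g : P2) ∣ f := by
  have := C_dvd_smul e⁻¹ hd
  rwa [smul_smul, inv_mul_cancel₀ he, one_smul] at this

lemma C_dvd_of_C_dvd_linear_mul (g a' : Polynomial ℂ) (h : P2)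
    (hd : (C g : P2) ∣ (Polynomial.X + C a') * h) : (C g : P2) ∣ h := by
  have h2 : (C g : P2) ∣ Polynomial.X * taylor (-a') h := by
    have := C_dvd_taylor (-a') hd
    rwa [taylor_mul, map_add, taylor_X, taylor_C, add_assoc, ← C_add, neg_add_cancel, C_0, add_zero] at this
  refine C_dvd_of_taylor (-a') ?_
  rw [C_dvd_iff_dvd_coeff] at h2 ⊢
  intro i
  simpa [coeff_X_mul] using h2 (i + 1)


/-! ### normal forms of the operators -/

lemma omegaLe_apply (lam : ℂ) (β : Polynomial ℂ) (m : ℤ) (f : P2) :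
    omegaLe lam β m f
      = lam ^ m • ((Polynomial.X + C ((m : ℂ) • β)) * taylor (C (m : ℂ)) f) := by
  simp [omegaLe, genL, mulOp, shiftOp, xP]

lemma omegaLo_apply (lam : ℂ) (β : Polynomial ℂ) (m : ℤ) (f : P2) :
    omegaLo lam β m f
      = lam ^ m • ((Polynomial.X + C ((m : ℂ) • (β + C (1/2)))) * taylor (C (m : ℂ)) f) := by
  simp [omegaLo, genL, mulOp, shiftOp, xP]

lemma omegaH_apply (lam : ℂ) (m : ℤ) (f : P2) :
    omegaH lam m f = lam ^ m • ((C Polynomial.X : P2) * taylor (C (m : ℂ)) f) := by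
  simp [omegaH, genH, mulOp, shiftOp, yP]

lemma omegaGe_apply (lam : ℂ) (k : ℤ) (f : P2) :
    omegaGe lam k f = lam ^ k • taylor (C ((k : ℂ) + 1/2)) f := by
  simp [omegaGe, shiftOp]

lemma omegaGo_apply (lam : ℂ) (β : Polynomial ℂ) (k : ℤ) (f : P2) :
    omegaGo lam β k f
      = lam ^ (k+1) • ((Polynomial.X + C (((2*k+1 : ℤ) : ℂ) • β)) * taylor (C ((k : ℂ) + 1/2)) f) := by
  simp [omegaGo, mulOp, shiftOp, xP]

lemma omegaQo_apply (lam : ℂ) (k : ℤ) (f : P2) :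
    omegaQo lam k f = lam ^ (k+1) • ((C Polynomial.X : P2) * taylor (C ((k : ℂ) + 1/2)) f) := by
  simp [omegaQo, mulOp, shiftOp, yP]

/-! ### `Rg` is invariant -/

lemma Rg_inv {g : Polynomial ℂ} (e : ℂ) (a : P2) (c : ℂ) {f : P2} (hf : f ∈ Rg g) :
    e • (a * taylor (C c) f) ∈ Rg g := by
  rw [mem_Rg] at hf ⊢
  exact C_dvd_smul e ((C_dvd_taylor _ hf).mul_left a)


/-! ### closure under multiplication -/

lemma mul_mem_of_closed (S : Submodule ℂ P2)
    (hX : ∀ f ∈ S, (Polynomial.X : P2) * f ∈ S)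
    (hY : ∀ f ∈ S, (C Polynomial.X : P2) * f ∈ S) :
    ∀ (p : P2) (f : P2), f ∈ S → p * f ∈ S := by
  have hXn : ∀ (n : ℕ), ∀ f ∈ S, (Polynomial.X : P2) ^ n * f ∈ S := by
    intro n
    induction n with
    | zero => intro f hf; simpa using hf
    | succ n ih =>
      intro f hf
      have := hX _ (ih f hf)
      rwa [← mul_assoc, mul_comm (Polynomial.X : P2) (_ ^ n), ← pow_succ] at this
  have hYn : ∀ (n : ℕ), ∀ f ∈ S, (C Polynomial.X : P2) ^ n * f ∈ S := by
    intro n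
    induction n with
    | zero => intro f hf; simpa using hf
    | succ n ih =>
      intro f hf
      have := hY _ (ih f hf)
      rwa [← mul_assoc, mul_comm (C Polynomial.X : P2) (_ ^ n), ← pow_succ] at this
  have hC : ∀ (a : Polynomial ℂ), ∀ f ∈ S, (C a : P2) * f ∈ S := by
    intro a
    induction a using Polynomial.induction_on' with
    | add p q hp hq =>
      intro f hf
      rw [map_add, add_mul]
      exact S.add_mem (hp f hf) (hq f hf)
    | monomial n c =>
      intro f hf
      have key : (C (monomial n c) : P2) * f = c • ((C Polynomial.X : P2) ^ n * f) := by
        rw [← C_mul_X_pow_eq_monomial, map_mul, map_pow, smul_eq_CC, ← mul_assoc]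
      rw [key]
      exact S.smul_mem _ (hYn n f hf)
  intro p
  induction p using Polynomial.induction_on' with
  | add p q hp hq =>
    intro f hf
    rw [add_mul]
    exact S.add_mem (hp f hf) (hq f hf)
  | monomial n a =>
    intro f hf
    have : (monomial n a : P2) * f = (Polynomial.X : P2) ^ n * ((C a : P2) * f) := by
      rw [← C_mul_X_pow_eq_monomial]; ring
    rw [this]
    exact hXn n _ (hC a f hf)


/-! ### coefficient computations for the difference operator -/

lemma taylor_coeff_of_le {R : Type*} [CommRing R] (r : R) (p : R[X]) (m : ℕ)
    (hm : p.natDegree ≤ m) : (taylor r p).coeff m = p.coeff m := by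
  rw [taylor_coeff]
  rcases lt_or_eq_of_le hm with h | h
  · rw [hasseDeriv_eq_zero_of_lt_natDegree p m h, eval_zero,
      coeff_eq_zero_of_natDegree_lt h]
  · have hh : hasseDeriv m p = C (p.coeff m) := by
      ext k
      rw [hasseDeriv_coeff, coeff_C]
      rcases Nat.eq_zero_or_pos k with rfl | hk
      · simp
      · have hlt : p.natDegree < k + m := by omega
        simp [coeff_eq_zero_of_natDegree_lt hlt, Nat.pos_iff_ne_zero.mp hk]
    rw [hh, eval_C]

lemma delta_coeff_of_le {R : Type*} [CommRing R] (r : R) (p : R[X]) (m : ℕ)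
    (hm : p.natDegree ≤ m) : (taylor r p - p).coeff m = 0 := by
  rw [coeff_sub, taylor_coeff_of_le r p m hm, sub_self]

lemma delta_natDegree_le {R : Type*} [CommRing R] (r : R) (p : R[X]) {d : ℕ}
    (hd : p.natDegree ≤ d) : (taylor r p - p).natDegree ≤ d - 1 := by
  rcases Nat.eq_zero_or_pos d with rfl | hpos
  · have : p = C (p.coeff 0) := eq_C_of_natDegree_le_zero hd
    rw [this, taylor_C, sub_self]
    simp
  · refine natDegree_le_iff_coeff_eq_zero.mpr fun N hN => ?_
    rcases le_or_gt d N with h | h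
    · exact delta_coeff_of_le r p N (hd.trans h)
    · omega

lemma delta_coeff_top {R : Type*} [CommRing R] (p : R[X]) {d : ℕ} (hd : p.natDegree = d)
    (hpos : 1 ≤ d) :
    (taylor (1 : R) p - p).coeff (d - 1) = (d : R) * p.coeff d := by
  set a := p.coeff d with ha
  set q := p - C a * Polynomial.X ^ d with hq
  have hqdeg : q.natDegree ≤ d - 1 := by
    refine natDegree_le_iff_coeff_eq_zero.mpr fun N hN => ?_
    have hdN : d ≤ N := by omega
    rcases lt_or_eq_of_le hdN with h | h
    · rw [hq, coeff_sub, coeff_C_mul, coeff_X_pow, if_neg (by omega),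
        coeff_eq_zero_of_natDegree_lt (by omega), mul_zero, sub_zero]
    · rw [hq, coeff_sub, coeff_C_mul, coeff_X_pow, ← h, if_pos rfl, mul_one, sub_self]
  have hsplit : p = q + C a * Polynomial.X ^ d := by rw [hq]; ring
  have h1 : (taylor (1 : R) q - q).coeff (d - 1) = 0 :=
    delta_coeff_of_le 1 q (d - 1) hqdeg
  have hchoose : d.choose (d - 1) = d := by
    have h1 : d - (d - 1) = 1 := by omega
    have := Nat.choose_symm (Nat.sub_le d 1)
    rw [h1] at this
    rw [← this, Nat.choose_one_right]
  have h2 : (taylor (1 : R) (C a * Polynomial.X ^ d) - C a * Polynomial.X ^ d).coeff (d - 1)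
      = (d : R) * a := by
    rw [C_mul_X_pow_eq_monomial, coeff_sub, taylor_coeff, hasseDeriv_monomial,
      coeff_monomial, if_neg (by omega), sub_zero, eval_monomial,
      Nat.sub_sub_self hpos, pow_one, mul_one, hchoose]
  calc (taylor (1 : R) p - p).coeff (d - 1)
      = (taylor (1 : R) q - q).coeff (d - 1)
        + (taylor (1 : R) (C a * Polynomial.X ^ d) - C a * Polynomial.X ^ d).coeff (d - 1) := by
        have hsp : taylor (1 : R) p - p
            = (taylor (1 : R) q - q)
              + (taylor (1 : R) (C a * Polynomial.X ^ d) - C a * Polynomial.X ^ d) := by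
          conv_lhs => rw [hsplit]
          rw [map_add]; ring
        rw [hsp, coeff_add]
    _ = (d : R) * p.coeff d := by rw [h1, h2, zero_add, ha]


/-! ### leading coefficients of elements of a shift-invariant ideal -/

lemma lead_dvd (F : Submodule ℂ P2) (g : Polynomial ℂ)
    (hdel : ∀ f ∈ F, taylor (1 : Polynomial ℂ) f - f ∈ F)
    (hg : ∀ a : Polynomial ℂ, (C a : P2) ∈ F → g ∣ a) :
    ∀ f ∈ F, g ∣ f.coeff f.natDegree := by
  suffices H : ∀ d : ℕ, ∀ f ∈ F, f.natDegree = d → g ∣ f.coeff f.natDegree by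
    intro f hf; exact H f.natDegree f hf rfl
  intro d
  induction d using Nat.strong_induction_on with
  | _ d IH =>
    intro f hf hd
    rcases Nat.eq_zero_or_pos d with rfl | hpos
    · have hfc : f = C (f.coeff 0) := eq_C_of_natDegree_le_zero hd.le
      rw [hd]
      exact hg _ (hfc ▸ hf)
    · have hf0 : f ≠ 0 := by
        intro h0; rw [h0, natDegree_zero] at hd; omega
      have ha : f.coeff d ≠ 0 := by
        rw [← hd]
        exact mt leadingCoeff_eq_zero.mp hf0
      set Δ : P2 := taylor (1 : Polynomial ℂ) f - f with hΔ
      have hΔF : Δ ∈ F := hdel f hf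
      have hΔc : Δ.coeff (d - 1) = (d : Polynomial ℂ) * f.coeff d :=
        delta_coeff_top f hd hpos
      have hdc : (d : Polynomial ℂ) * f.coeff d ≠ 0 :=
        mul_ne_zero (Nat.cast_ne_zero.mpr (by omega)) ha
      have hΔdeg : Δ.natDegree = d - 1 := by
        have hle : Δ.natDegree ≤ d - 1 := delta_natDegree_le 1 f hd.le
        have hge : d - 1 ≤ Δ.natDegree := le_natDegree_of_ne_zero (hΔc ▸ hdc)
        omega
      have := IH (d - 1) (by omega) Δ hΔF hΔdeg
      rw [hΔdeg, hΔc] at this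
      have hdu : IsUnit ((d : Polynomial ℂ)) := by
        rw [← Polynomial.C_eq_natCast]
        exact Polynomial.isUnit_C.mpr (IsUnit.mk0 _ (Nat.cast_ne_zero.mpr (by omega)))
      rw [hd]
      exact hdu.dvd_mul_left.mp this

/-! ### elements of a shift-invariant ideal are divisible by `C g` -/

lemma dvd_of_lead (F : Submodule ℂ P2) (g : Polynomial ℂ)
    (hmul : ∀ (p : P2), ∀ f ∈ F, p * f ∈ F)
    (hlead : ∀ f ∈ F, g ∣ f.coeff f.natDegree)
    (hgF : (C g : P2) ∈ F) :
    ∀ f ∈ F, (C g : P2) ∣ f := by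
  suffices H : ∀ d : ℕ, ∀ f ∈ F, f.natDegree = d → (C g : P2) ∣ f by
    intro f hf; exact H f.natDegree f hf rfl
  intro d
  induction d using Nat.strong_induction_on with
  | _ d IH =>
    intro f hf hd
    obtain ⟨c, hc⟩ := hlead f hf
    rw [hd] at hc
    rcases Nat.eq_zero_or_pos d with rfl | hpos
    · have hfc : f = C (f.coeff 0) := eq_C_of_natDegree_le_zero hd.le
      rw [hfc, hc, map_mul]
      exact Dvd.intro _ rfl
    · set m : P2 := C (f.coeff d) * Polynomial.X ^ d with hm
      have hmdvd : (C g : P2) ∣ m := by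
        rw [hm, hc, map_mul]
        exact (Dvd.intro _ rfl).mul_right _
      have hmF : m ∈ F := by
        obtain ⟨w, hw⟩ := hmdvd
        rw [hw, mul_comm]
        exact hmul w _ hgF
      have hfm : f - m ∈ F := F.sub_mem hf hmF
      have hdeg : (f - m).natDegree ≤ d - 1 := by
        refine natDegree_le_iff_coeff_eq_zero.mpr fun N hN => ?_
        have hdN : d ≤ N := by omega
        rcases lt_or_eq_of_le hdN with h | h
        · rw [coeff_sub, hm, coeff_C_mul, coeff_X_pow, if_neg (by omega),
            coeff_eq_zero_of_natDegree_lt (by omega), mul_zero, sub_zero]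
        · rw [coeff_sub, hm, coeff_C_mul, coeff_X_pow, ← h, if_pos rfl, mul_one, sub_self]
      have hdvd1 : (C g : P2) ∣ f - m :=
        IH (f - m).natDegree (by omega) _ hfm rfl
      have : f = (f - m) + m := by ring
      rw [this]
      exact dvd_add hdvd1 hmdvd


lemma Rg_inv' {g : Polynomial ℂ} (e : ℂ) (c : ℂ) {f : P2} (hf : f ∈ Rg g) :
    e • taylor (C c) f ∈ Rg g := by
  rw [mem_Rg] at hf ⊢
  exact C_dvd_smul e (C_dvd_taylor _ hf)

lemma hard (lam : ℂ) (hlam : lam ≠ 0) (β : Polynomial ℂ) (hβ : β.eval 0 ≠ 0)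
    (F₀ F₁ : Submodule ℂ P2) (h : IsOmegaSub lam β F₀ F₁) :
    ∃ g : Polynomial ℂ, F₀ = Rg g ∧ F₁ = Rg g := by
  obtain ⟨hLe, hLo, hHe, hHo, hGe, hGo, hQe, hQo⟩ := h
  have hX0 : ∀ f ∈ F₀, (Polynomial.X : P2) * f ∈ F₀ := by
    intro f hf
    have h1 := hLe 0 f hf
    rw [omegaLe_apply] at h1
    simpa [taylor_zero] using h1
  have hY0 : ∀ f ∈ F₀, (C Polynomial.X : P2) * f ∈ F₀ := by
    intro f hf
    have h1 := hHe 0 f hf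
    rw [omegaH_apply] at h1
    simpa [taylor_zero] using h1
  have mul₀ := mul_mem_of_closed F₀ hX0 hY0
  have hX1 : ∀ f ∈ F₁, (Polynomial.X : P2) * f ∈ F₁ := by
    intro f hf
    have h1 := hLo 0 f hf
    rw [omegaLo_apply] at h1
    simpa [taylor_zero] using h1
  have hY1 : ∀ f ∈ F₁, (C Polynomial.X : P2) * f ∈ F₁ := by
    intro f hf
    have h1 := hHo 0 f hf
    rw [omegaH_apply] at h1
    simpa [taylor_zero] using h1
  have mul₁ := mul_mem_of_closed F₁ hX1 hY1
  -- the composite operators G∘G on the even part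
  have hGG : ∀ (n l : ℤ), ∀ f ∈ F₀,
      (Polynomial.X + C (((2*l+1 : ℤ) : ℂ) • β)) * taylor (C ((n : ℂ))) f ∈ F₀ := by
    intro n l f hf
    have h1 := hGo l _ (hGe (n - 1 - l) f hf)
    rw [omegaGe_apply, map_smul, omegaGo_apply, taylor_taylor] at h1
    have hc : (C ((l : ℂ) + 1/2) + C (((n - 1 - l : ℤ) : ℂ) + 1/2) : Polynomial ℂ)
        = C ((n : ℂ)) := by
      rw [← C_add]; congr 1; push_cast; ring
    rw [hc, smul_smul] at h1
    exact (F₀.smul_mem_iff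
      (mul_ne_zero (zpow_ne_zero _ hlam) (zpow_ne_zero _ hlam))).mp h1
  -- shift invariance of F₀
  have hcop : IsCoprime (Polynomial.X : Polynomial ℂ) β := by
    refine (Polynomial.prime_X.irreducible).coprime_iff_not_dvd.mpr ?_
    rw [Polynomial.X_dvd_iff, Polynomial.coeff_zero_eq_eval_zero]
    exact hβ
  obtain ⟨u, v, huv⟩ := hcop
  have hshift : ∀ n : ℤ, ∀ f ∈ F₀, taylor (C ((n : ℂ))) f ∈ F₀ := by
    intro n f hf
    set t := taylor (C ((n : ℂ))) f with ht
    have hYt : (C Polynomial.X : P2) * t ∈ F₀ := by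
      have h1 := hHe n f hf
      rw [omegaH_apply] at h1
      exact (F₀.smul_mem_iff (zpow_ne_zero _ hlam)).mp h1
    have h1 := hGG n 0 f hf
    have h3 := hGG n 1 f hf
    have hb : (C β : P2) * t ∈ F₀ := by
      have hsub := F₀.sub_mem h3 h1
      have heq2 : (Polynomial.X + C (((2*1+1 : ℤ) : ℂ) • β)) * t
          - (Polynomial.X + C (((2*0+1 : ℤ) : ℂ) • β)) * t
          = (2 : ℂ) • ((C β : P2) * t) := by
        have h31 : ((2*1+1 : ℤ) : ℂ) = 3 := by norm_num
        have h01 : ((2*0+1 : ℤ) : ℂ) = 1 := by norm_num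
        rw [h31, h01, smul_eq_CC]
        simp only [Polynomial.smul_eq_C_mul, map_mul, map_ofNat, map_one, one_mul, one_smul]
        ring
      rw [← ht, heq2] at hsub
      exact (F₀.smul_mem_iff (by norm_num)).mp hsub
    have hsum := F₀.add_mem (mul₀ (C u) _ hYt) (mul₀ (C v) _ hb)
    have heq : (C u : P2) * (C Polynomial.X * t) + (C v : P2) * (C β * t) = t := by
      rw [← mul_assoc, ← mul_assoc, ← map_mul, ← map_mul, ← add_mul, ← map_add, huv,
        map_one, one_mul]
    rwa [heq] at hsum
  -- the ideal of constants
  let J : Ideal (Polynomial ℂ) :=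
    { carrier := {a | (C a : P2) ∈ F₀}
      add_mem' := fun ha hb => by simpa [map_add] using F₀.add_mem ha hb
      zero_mem' := by simpa using F₀.zero_mem
      smul_mem' := fun b a ha => by
        simpa [smul_eq_mul, map_mul] using mul₀ (C b) _ ha }
  haveI : J.IsPrincipal := IsPrincipalIdealRing.principal J
  set g := Submodule.IsPrincipal.generator J with hgdef
  have hJ : ∀ a : Polynomial ℂ, a ∈ J ↔ g ∣ a := by
    intro a
    rw [← Ideal.span_singleton_generator J, Ideal.mem_span_singleton, hgdef]
  have hCg : (C g : P2) ∈ F₀ := Submodule.IsPrincipal.generator_mem J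
  have hdel : ∀ f ∈ F₀, taylor (1 : Polynomial ℂ) f - f ∈ F₀ := by
    intro f hf
    have h1 := hshift 1 f hf
    have hone : (C ((1 : ℤ) : ℂ) : Polynomial ℂ) = 1 := by norm_num
    rw [hone] at h1
    exact F₀.sub_mem h1 hf
  have hg : ∀ a : Polynomial ℂ, (C a : P2) ∈ F₀ → g ∣ a := fun a ha => (hJ a).mp ha
  have hlead := lead_dvd F₀ g hdel hg
  have hdvd := dvd_of_lead F₀ g (fun p f hf => mul₀ p f hf) hlead hCg
  have hF0 : F₀ = Rg g := by
    apply le_antisymm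
    · intro f hf
      exact mem_Rg.mpr (hdvd f hf)
    · rintro f ⟨w, rfl⟩
      show (C g : P2) * w ∈ F₀
      rw [mul_comm]
      exact mul₀ w _ hCg
  refine ⟨g, hF0, le_antisymm ?_ ?_⟩
  · intro f hf
    have h1 := hGo 0 f hf
    rw [omegaGo_apply, hF0, mem_Rg] at h1
    have h2 := C_dvd_of_smul (zpow_ne_zero _ hlam) h1
    have h3 := C_dvd_of_C_dvd_linear_mul g _ _ h2
    exact mem_Rg.mpr (C_dvd_of_taylor _ h3)
  · rintro f ⟨w, rfl⟩
    have hf0 : taylor (C (-(1/2) : ℂ)) ((C g : P2) * w) ∈ F₀ := by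
      rw [hF0]
      exact mem_Rg.mpr (C_dvd_taylor _ ⟨w, rfl⟩)
    have h1 := hGe 0 _ hf0
    rw [omegaGe_apply, taylor_taylor] at h1
    simpa [← C_add, taylor_zero, mulOp] using h1

lemma easy (lam : ℂ) (β : Polynomial ℂ) (g : Polynomial ℂ) :
    IsOmegaSub lam β (Rg g) (Rg g) := by
  refine ⟨?_, ?_, ?_, ?_, ?_, ?_, ?_, ?_⟩
  · intro m f hf; rw [omegaLe_apply]; exact Rg_inv _ _ _ hf
  · intro m f hf; rw [omegaLo_apply]; exact Rg_inv _ _ _ hf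
  · intro m f hf; rw [omegaH_apply]; exact Rg_inv _ _ _ hf
  · intro m f hf; rw [omegaH_apply]; exact Rg_inv _ _ _ hf
  · intro k f hf; rw [omegaGe_apply]; exact Rg_inv' _ _ hf
  · intro k f hf; rw [omegaGo_apply]; exact Rg_inv _ _ _ hf
  · intro k f _; simpa [omegaQe] using (Rg g).zero_mem
  · intro k f hf; rw [omegaQo_apply]; exact Rg_inv _ _ _ hf

end S7

/-- For `β(0) ≠ 0`, the `𝔤`-submodules of `Ω(λ,β)` are exactly the subspaces
`R_g = g(y)ℂ[x,y] ⊕ g(t)ℂ[s,t]`, `g ∈ ℂ[y]`; moreover `R_g ⊆ R_ĝ` whenever `ĝ ∣ g`. -/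
theorem statement7 (lam : ℂ) (hlam : lam ≠ 0) (β : Polynomial ℂ)
    (hβ : β.eval 0 ≠ 0) :
    (∀ F₀ F₁ : Submodule ℂ P2,
      IsOmegaSub lam β F₀ F₁ ↔ ∃ g : Polynomial ℂ, F₀ = Rg g ∧ F₁ = Rg g) ∧
    (∀ g ghat : Polynomial ℂ, ghat ∣ g → Rg g ≤ Rg ghat) := by
  constructor
  · intro F₀ F₁
    constructor
    · exact S7.hard lam hlam β hβ F₀ F₁
    · rintro ⟨g, rfl, rfl⟩
      exact S7.easy lam β g
  · intro g ghat hd f hf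
    rw [S7.mem_Rg] at hf ⊢
    obtain ⟨c, rfl⟩ := hd
    exact dvd_trans ⟨C c, by rw [← map_mul]⟩ hf
end
end
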